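/- arXiv:math/0207246 — 3 statements merged into one kernel-verified Lean document; each statement's English description precedes it below -/
import Mathlib

section
/- If G is a group of order 60 with a unique (normal) Sylow 3-subgroup, then G has a unique Sylow 5-subgroup. -/
/-!
As the Sylow 3-subgroup `P` is normal, `N = Q ⊔ P` has order 15 for a Sylow 5-subgroup `Q`.
Inside `N` the number of Sylow 5-subgroups divides 3 and is `1 mod 5`, so `Q` is normal in `N`,
i.e. `N ≤ N_G(Q)`. Hence `n₅ = [G : N_G(Q)]` divides `[G : N] = 4`, and `n₅ ≡ 1 mod 5`
forces `n₅ = 1`.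
-/

open Subgroup

namespace Sylow

variable {G : Type*} [Group G] {p : ℕ}

lemma normal_of_card_eq_one (P : Sylow p G) (h : Nat.card (Sylow p G) = 1) :
    (P : Subgroup G).Normal :=
  have : Subsingleton (Sylow p G) := (Nat.card_eq_one_iff_unique.mp h).1
  P.normal_of_subsingleton

variable [hp : Fact p.Prime]

lemma card_eq_of_card_eq_mul [Finite G] {m : ℕ} (P : Sylow p G) (hG : Nat.card G = p * m)
    (hm : ¬ p ∣ m) : Nat.card P = p := by
  have hm0 : m ≠ 0 := by rintro rfl; exact hm (dvd_zero p)
  rw [P.card_eq_multiplicity, hG, Nat.factorization_mul hp.out.ne_zero hm0, Finsupp.add_apply,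
    hp.out.factorization_self, Nat.factorization_eq_zero_of_not_dvd hm, pow_one]

lemma card_eq_one_of_dvd [Finite (Sylow p G)] {m : ℕ} (hdvd : Nat.card (Sylow p G) ∣ m)
    (hm0 : m ≠ 0) (hmp : m ≤ p) : Nat.card (Sylow p G) = 1 := by
  have hmod : Nat.card (Sylow p G) % p = 1 % p := card_sylow_modEq_one p G
  have hle : Nat.card (Sylow p G) ≤ p := (Nat.le_of_dvd (Nat.pos_of_ne_zero hm0) hdvd).trans hmp
  rcases hle.lt_or_eq with hlt | heq
  · rwa [Nat.mod_eq_of_lt hlt, Nat.mod_eq_of_lt hp.out.one_lt] at hmod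
  · exact absurd (by rw [heq]) (not_dvd_card_sylow p G)

lemma card_eq_one_of_card_eq_mul [Finite G] {m : ℕ} (hG : Nat.card G = p * m) (hm0 : m ≠ 0)
    (hmp : m < p) : Nat.card (Sylow p G) = 1 := by
  obtain ⟨P⟩ : Nonempty (Sylow p G) := inferInstance
  have hP : Nat.card P = p := P.card_eq_of_card_eq_mul hG (Nat.not_dvd_of_pos_of_lt
    (Nat.pos_of_ne_zero hm0) hmp)
  have hindex : (P : Subgroup G).index = m := by
    have := card_mul_index (P : Subgroup G)
    rw [hP, hG] at this
    exact Nat.eq_of_mul_eq_mul_left hp.out.pos this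
  exact card_eq_one_of_dvd (hindex ▸ P.card_dvd_index) hm0 hmp.le

/-- `Q` is then normal in `N`, so `N ≤ N_G(Q)`, whose index is the number of Sylow subgroups. -/
lemma card_dvd_index_of_le [Finite (Sylow p G)] (Q : Sylow p G) {N : Subgroup G}
    (hQN : (Q : Subgroup G) ≤ N) (hN : Nat.card (Sylow p N) = 1) :
    Nat.card (Sylow p G) ∣ N.index := by
  have : ((Q : Subgroup G).subgroupOf N).Normal := by
    simpa only [coe_subtype] using (Q.subtype hQN).normal_of_card_eq_one hN
  rw [Q.card_eq_index_normalizer]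
  exact index_dvd_of_le (le_normalizer_of_normal_subgroupOf hQN)

end Sylow

lemma Subgroup.card_sup_of_normal_of_coprime {G : Type*} [Group G] {H K : Subgroup G} [K.Normal]
    (h : (Nat.card H).Coprime (Nat.card K)) : Nat.card ↥(H ⊔ K) = Nat.card H * Nat.card K := by
  calc Nat.card ↥(H ⊔ K) = Nat.card K * K.relIndex (H ⊔ K) := by
        rw [← relIndex_bot_left, ← relIndex_bot_left,
          relIndex_mul_relIndex _ _ _ bot_le le_sup_right]
    _ = Nat.card K * Nat.card H := by
        rw [relIndex_sup_right, ← inf_relIndex_right,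
          (disjoint_of_coprime_natCard h.symm).eq_bot, relIndex_bot_left]
    _ = Nat.card H * Nat.card K := mul_comm _ _

theorem order_60_unique_sylow3_unique_sylow5 (G : Type*) [Group G] [Fintype G]
    (hG : Fintype.card G = 60) (h3 : Nat.card (Sylow 3 G) = 1) :
    Nat.card (Sylow 5 G) = 1 := by
  have hcard : Nat.card G = 60 := by rw [Nat.card_eq_fintype_card, hG]
  have : Fact (Nat.Prime 3) := ⟨by norm_num⟩
  have : Fact (Nat.Prime 5) := ⟨by norm_num⟩
  obtain ⟨P⟩ : Nonempty (Sylow 3 G) := inferInstance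
  obtain ⟨Q⟩ : Nonempty (Sylow 5 G) := inferInstance
  have := P.normal_of_card_eq_one h3
  have hP : Nat.card P = 3 := P.card_eq_of_card_eq_mul (m := 20) hcard (by norm_num)
  have hQ : Nat.card Q = 5 := Q.card_eq_of_card_eq_mul (m := 12) hcard (by norm_num)
  set N := (Q : Subgroup G) ⊔ P
  have hN : Nat.card N = 15 := by
    rw [card_sup_of_normal_of_coprime (by rw [hP, hQ]; decide), hP, hQ]
  have hNindex : N.index = 4 := by
    have := card_mul_index N
    rw [hN, hcard] at this
    omega
  have h5N : Nat.card (Sylow 5 N) = 1 :=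
    Sylow.card_eq_one_of_card_eq_mul (m := 3) hN (by norm_num) (by norm_num)
  exact Sylow.card_eq_one_of_dvd (hNindex ▸ Q.card_dvd_index_of_le le_sup_left h5N)
    (by norm_num) (by norm_num)
end

section
/- There is no finite group G of order 48 containing subgroups U ≅ D3 (dihedral of order 6) and V ≅ A4 with U ∩ V cyclic of order 3 such that U and V generate G. -/
open Subgroup

set_option maxHeartbeats 8000000 in
set_option maxRecDepth 10000 in
private lemma keyA4' : ∀ x z : alternatingGroup (Fin 4), x ≠ 1 → z^2 = 1 → z ≠ 1 →
    ∃ g h : alternatingGroup (Fin 4), (g*x*g⁻¹) * (h*x⁻¹*h⁻¹) = z := by decide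

set_option maxHeartbeats 2000000 in
private lemma cardA4' : Nat.card (alternatingGroup (Fin 4)) = 12 := by
  rw [Nat.card_eq_fintype_card]; decide

private def QA4 : Subgroup (alternatingGroup (Fin 4)) where
  carrier := {z | z ^ 2 = 1}
  one_mem' := by decide
  mul_mem' := by intro a b ha hb; revert a b ha hb; decide
  inv_mem' := by intro a ha; revert a ha; decide

instance : DecidablePred (· ∈ QA4) := fun z => inferInstanceAs (Decidable (z ^ 2 = 1))

set_option maxHeartbeats 2000000 in
private lemma cardQA4 : Nat.card QA4 = 4 := by
  rw [Nat.card_eq_fintype_card]; decide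

private lemma A4_sup (N P : Subgroup (alternatingGroup (Fin 4))) (hN : N.Normal) (hNbot : N ≠ ⊥)
    (hP : Nat.card P = 3) : N ⊔ P = ⊤ := by
  obtain ⟨⟨x, hxN⟩, hx1⟩ := Subgroup.ne_bot_iff_exists_ne_one.mp hNbot
  have hx : x ≠ 1 := fun h => hx1 (Subtype.ext h)
  have hQN : QA4 ≤ N := by
    intro z hz
    rcases eq_or_ne z 1 with rfl | hz1
    · exact N.one_mem
    · obtain ⟨g, h, hgh⟩ := keyA4' x z hx hz hz1
      exact hgh ▸ N.mul_mem (hN.conj_mem x hxN g) (hN.conj_mem _ (N.inv_mem hxN) h)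
  have h4 : (4:ℕ) ∣ Nat.card (N ⊔ P : Subgroup _) := by
    have := card_dvd_of_le (le_trans hQN (le_sup_left : N ≤ N ⊔ P))
    rwa [cardQA4] at this
  have h3 : (3:ℕ) ∣ Nat.card (N ⊔ P : Subgroup _) := by
    have := card_dvd_of_le (le_sup_right : P ≤ N ⊔ P)
    rwa [hP] at this
  have h12 : Nat.card (N ⊔ P : Subgroup _) ∣ 12 := by
    have := card_subgroup_dvd_card (N ⊔ P)
    rwa [cardA4'] at this
  have h12' : (12:ℕ) ∣ Nat.card (N ⊔ P : Subgroup _) :=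
    Nat.Coprime.mul_dvd_of_dvd_of_dvd (by norm_num) h4 h3
  have : Nat.card (N ⊔ P : Subgroup _) = 12 := Nat.dvd_antisymm h12 h12'
  exact Subgroup.eq_top_of_card_eq _ (this.trans cardA4'.symm)

theorem no_order_48_gen_by_D3_A4 (G : Type*) [Group G] [Finite G]
    (hG : Nat.card G = 48) (U V : Subgroup G)
    (hU : Nonempty (U ≃* DihedralGroup 3))
    (hV : Nonempty (V ≃* alternatingGroup (Fin 4)))
    (hUV : Nonempty ((↥(U ⊓ V)) ≃* Multiplicative (ZMod 3))) :
    U ⊔ V ≠ ⊤ := by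
  obtain ⟨eU⟩ := hU; obtain ⟨eV⟩ := hV; obtain ⟨eUV⟩ := hUV
  intro htop
  have cardU : Nat.card U = 6 := by
    rw [Nat.card_congr eU.toEquiv, Nat.card_eq_fintype_card, DihedralGroup.card]
  have cardV : Nat.card V = 12 := by
    rw [Nat.card_congr eV.toEquiv]; exact cardA4'
  have cardP : Nat.card (U ⊓ V : Subgroup G) = 3 := by
    rw [Nat.card_congr eUV.toEquiv, Nat.card_eq_fintype_card]
    simp
  set K := V.normalCore with hKdef
  haveI hKnorm : K.Normal := V.normalCore_normal
  have hKV : K ≤ V := V.normalCore_le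
  -- index of V is 4
  have hVi : V.index = 4 := by
    have h := V.card_mul_index
    rw [cardV, hG] at h; omega
  -- index of K divides 24
  have hKi : K.index ∣ 24 := by
    classical
    haveI : Fintype (G ⧸ V) := Fintype.ofFinite _
    have hcard4 : Nat.card (G ⧸ V) = 4 := by rw [← V.index_eq_card, hVi]
    have : K.index = Nat.card (MulAction.toPermHom G (G ⧸ V)).range := by
      rw [hKdef, V.normalCore_eq_ker, index_ker]
    rw [this]
    calc Nat.card (MulAction.toPermHom G (G ⧸ V)).range
        ∣ Nat.card (Equiv.Perm (G ⧸ V)) := card_subgroup_dvd_card _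
      _ = 24 := by
          rw [Nat.card_eq_fintype_card, Fintype.card_perm, ← Nat.card_eq_fintype_card, hcard4]
          rfl
  have hcK : Nat.card K * K.index = 48 := by rw [K.card_mul_index, hG]
  have cardKdvd : Nat.card K ∣ 12 := by rw [← cardV]; exact card_dvd_of_le hKV
  have hKbot : K ≠ ⊥ := by
    intro h
    have h1 : Nat.card K = 1 := by rw [h, card_bot]
    rw [h1, one_mul] at hcK
    have := Nat.le_of_dvd (by norm_num) hKi
    omega
  -- transfer to A4
  have hPV : U ⊓ V ≤ V := inf_le_right
  set N : Subgroup (alternatingGroup (Fin 4)) := (K.subgroupOf V).map eV.toMonoidHom with hN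
  set P' : Subgroup (alternatingGroup (Fin 4)) :=
    ((U ⊓ V).subgroupOf V).map eV.toMonoidHom with hP'
  have hNnorm : N.Normal := (hKnorm.subgroupOf V).map eV.toMonoidHom eV.surjective
  have cardN : Nat.card N = Nat.card K := by
    rw [Nat.card_congr ((K.subgroupOf V).equivMapOfInjective eV.toMonoidHom eV.injective).toEquiv.symm]
    exact Nat.card_congr (subgroupOfEquivOfLe hKV).toEquiv
  have cardP' : Nat.card P' = 3 := by
    rw [Nat.card_congr (((U ⊓ V).subgroupOf V).equivMapOfInjective eV.toMonoidHom eV.injective).toEquiv.symm,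
      Nat.card_congr (subgroupOfEquivOfLe hPV).toEquiv]
    exact cardP
  have hNbot : N ≠ ⊥ := by
    intro h
    apply hKbot
    have h1 : Nat.card K = 1 := by rw [← cardN, h, card_bot]
    rw [h1, one_mul] at hcK
    have := Nat.le_of_dvd (by norm_num) hKi
    omega
  have hsup : N ⊔ P' = ⊤ := A4_sup N P' hNnorm hNbot cardP'
  -- pull back: V ≤ K ⊔ (U ⊓ V)
  have hVle : V ≤ K ⊔ (U ⊓ V) := by
    have hmap : (K.subgroupOf V ⊔ (U ⊓ V).subgroupOf V).map eV.toMonoidHom = ⊤ := by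
      rw [Subgroup.map_sup, ← hN, ← hP', hsup]
    have h2 : K.subgroupOf V ⊔ (U ⊓ V).subgroupOf V = ⊤ := by
      have hinj : Function.Injective eV.toMonoidHom := eV.injective
      apply Subgroup.map_injective hinj
      rw [hmap, Subgroup.map_top_of_surjective _ eV.surjective]
    have h3 : (K ⊔ (U ⊓ V)).subgroupOf V = ⊤ := by
      rw [eq_top_iff, ← h2]
      exact sup_le (Subgroup.comap_mono le_sup_left) (Subgroup.comap_mono le_sup_right)
    exact Subgroup.subgroupOf_eq_top.mp h3
  -- hence U ⊔ K = ⊤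
  have hUK : U ⊔ K = ⊤ := by
    rw [eq_top_iff, ← htop]
    refine sup_le le_sup_left (le_trans hVle (sup_le le_sup_right (le_trans inf_le_left le_sup_left)))
  -- quotient argument
  set π := QuotientGroup.mk' K with hπ
  have hmapU : U.map π = ⊤ := by
    have : (U ⊔ K).map π = U.map π ⊔ K.map π := Subgroup.map_sup _ _ _
    rw [hUK, Subgroup.map_top_of_surjective _ (QuotientGroup.mk'_surjective K)] at this
    have hKbotmap : K.map π = ⊥ := by
      rw [Subgroup.map_eq_bot_iff, QuotientGroup.ker_mk']
    rw [hKbotmap, sup_bot_eq] at this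
    exact this.symm
  have hsurj : Function.Surjective (π.comp U.subtype) := by
    rw [← MonoidHom.range_eq_top]
    rw [MonoidHom.range_comp, Subgroup.range_subtype]
    exact hmapU
  have hidx6 : K.index ∣ 6 := by
    have := Subgroup.card_dvd_of_surjective _ hsurj
    rw [cardU, ← K.index_eq_card] at this
    exact this
  -- final arithmetic contradiction
  have hKpos : 0 < Nat.card K := Nat.card_pos
  have hK12 : Nat.card K ≤ 12 := Nat.le_of_dvd (by norm_num) cardKdvd
  have hi6 : K.index ≤ 6 := Nat.le_of_dvd (by norm_num) hidx6
  have hipos : K.index ≠ 0 := by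
    intro h0
    rw [h0, Nat.mul_zero] at hcK
    omega
  interval_cases h : Nat.card K <;> interval_cases h2 : K.index <;> omega
end

section
/- A group of order 48 generated by subgroups isomorphic to D3 and D2 intersecting in Z/2Z has exactly four Sylow 3-subgroups. -/
/-!
Sylow counting leaves `n₃ ∈ {1, 4, 16}`; fix an involution `t ∈ U ⊓ V`.
If `n₃ = 1`, the Sylow 3-subgroup `P` is normal and contains every element of order 3. In
`U ≅ D₃` every element `u` has `u ^ 3 = 1` or `(u * t) ^ 3 = 1`, so `U ≤ P ⊔ V`, hence
`P ⊔ V = G` and `16 = |G : P|` divides `|V| = 4`.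
If `n₃ = 16`, `P` is self-normalizing and abelian, so by Burnside's transfer theorem it has a
normal complement of order 16. That complement contains every involution, hence all of `U`
(every element of a dihedral group is a product of two involutions), contradicting `3 ∣ |U|`.
-/

open Subgroup

namespace DihedralGroup

variable {n : ℕ}

theorem exists_sq_eq_one_mul_eq (a : DihedralGroup n) :
    ∃ s₁ s₂ : DihedralGroup n, s₁ ^ 2 = 1 ∧ s₂ ^ 2 = 1 ∧ s₁ * s₂ = a := by
  cases a with
  | r i => exact ⟨sr 0, sr i, by simp [sq], by simp [sq], by rw [sr_mul_sr, sub_zero]⟩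
  | sr i => exact ⟨sr i, 1, by simp [sq], one_pow 2, mul_one _⟩

theorem exists_eq_sr_of_sq_eq_one (hn : Odd n) {t : DihedralGroup n} (ht : t ≠ 1)
    (ht2 : t ^ 2 = 1) : ∃ j, t = sr j := by
  cases t with
  | r j =>
    have h2 : IsUnit (2 : ZMod n) := by
      exact_mod_cast (ZMod.isUnit_iff_coprime 2 n).mpr (Nat.coprime_two_left.mpr hn)
    rw [r_pow, one_def, r.injEq, Nat.cast_ofNat, h2.mul_left_eq_zero] at ht2
    exact absurd (by rw [ht2, one_def]) ht
  | sr j => exact ⟨j, rfl⟩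

theorem pow_eq_one_or_mul_pow_eq_one (hn : Odd n) {t : DihedralGroup n} (ht : t ≠ 1)
    (ht2 : t ^ 2 = 1) (a : DihedralGroup n) : a ^ n = 1 ∨ (a * t) ^ n = 1 := by
  obtain ⟨j, rfl⟩ := exists_eq_sr_of_sq_eq_one hn ht ht2
  cases a with
  | r i => left; simp [r_pow]
  | sr i => right; simp [sr_mul_sr, r_pow]

end DihedralGroup

section

variable {G : Type*} [Group G]

theorem exists_sq_eq_one_mul_eq_of_mulEquiv {n : ℕ} {U : Subgroup G}
    (e : U ≃* DihedralGroup n) {u : G} (hu : u ∈ U) :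
    ∃ s₁ s₂ : G, s₁ ^ 2 = 1 ∧ s₂ ^ 2 = 1 ∧ s₁ * s₂ = u := by
  obtain ⟨a, b, ha, hb, hab⟩ := (e ⟨u, hu⟩).exists_sq_eq_one_mul_eq
  refine ⟨e.symm a, e.symm b, ?_, ?_, ?_⟩
  · rw [← coe_pow, ← map_pow, ha, map_one, coe_one]
  · rw [← coe_pow, ← map_pow, hb, map_one, coe_one]
  · rw [← coe_mul, ← map_mul, hab, MulEquiv.symm_apply_apply]

theorem pow_eq_one_or_mul_pow_eq_one_of_mulEquiv {n : ℕ} (hn : Odd n) {U : Subgroup G}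
    (e : U ≃* DihedralGroup n) {t u : G} (ht : t ∈ U) (hu : u ∈ U) (ht1 : t ≠ 1)
    (ht2 : t ^ 2 = 1) : u ^ n = 1 ∨ (u * t) ^ n = 1 := by
  have ht1' : e ⟨t, ht⟩ ≠ 1 := by simpa [Subtype.ext_iff] using ht1
  have ht2' : e ⟨t, ht⟩ ^ 2 = 1 := by simpa [← map_pow, Subtype.ext_iff] using ht2
  simpa [← map_pow, ← map_mul, Subtype.ext_iff] using
    DihedralGroup.pow_eq_one_or_mul_pow_eq_one hn ht1' ht2' (e ⟨u, hu⟩)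

theorem exists_mem_ne_one_sq_eq_one_of_mulEquiv {H : Subgroup G}
    (e : H ≃* Multiplicative (ZMod 2)) : ∃ t ∈ H, t ≠ 1 ∧ t ^ 2 = 1 := by
  refine ⟨e.symm (.ofAdd 1), (e.symm _).2, ?_, ?_⟩
  · simp
  · rw [← coe_pow, ← map_pow, (by decide : Multiplicative.ofAdd (1 : ZMod 2) ^ 2 = 1), map_one,
      coe_one]

theorem MonoidHom.map_eq_one_of_sq_eq_one {H : Type*} [Group H] [Finite H] (φ : G →* H)
    (hH : Odd (Nat.card H)) {g : G} (hg : g ^ 2 = 1) : φ g = 1 := by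
  have h : φ g ^ Nat.gcd 2 (Nat.card H) = 1 :=
    pow_gcd_eq_one.mpr ⟨by rw [← map_pow, hg, map_one], pow_card_eq_one'⟩
  rwa [Nat.coprime_two_left.mpr hH, pow_one] at h

theorem Subgroup.index_dvd_card_of_sup_eq_top {N K : Subgroup G} [N.Normal] (h : N ⊔ K = ⊤) :
    N.index ∣ Nat.card K := by
  rw [← relIndex_top_right, ← h, relIndex_sup_left]
  exact relIndex_dvd_card N K

variable {p : ℕ}

theorem Sylow.mem_of_pow_eq_one [Subsingleton (Sylow p G)] (P : Sylow p G) {g : G}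
    (hg : g ^ p = 1) : g ∈ P := by
  have hpg : IsPGroup p (zpowers g) := IsPGroup.of_card_dvd_pow (n := 1) <| by
    rw [Nat.card_zpowers, pow_one]
    exact orderOf_dvd_of_pow_eq_one hg
  obtain ⟨Q, hQ⟩ := hpg.exists_le_sylow
  exact Subsingleton.elim Q P ▸ hQ (mem_zpowers g)

theorem Sylow.le_sup_of_mulEquiv_dihedralGroup [Subsingleton (Sylow p G)] (hp : Odd p)
    (P : Sylow p G) {U V : Subgroup G} (e : U ≃* DihedralGroup p) {t : G} (htU : t ∈ U)
    (htV : t ∈ V) (ht1 : t ≠ 1) (ht2 : t ^ 2 = 1) : U ≤ (P : Subgroup G) ⊔ V := by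
  intro u hu
  rcases pow_eq_one_or_mul_pow_eq_one_of_mulEquiv hp e htU hu ht1 ht2 with h | h
  · exact mem_sup_left (P.mem_of_pow_eq_one h)
  · simpa using mul_mem (mem_sup_left (P.mem_of_pow_eq_one h)) (mem_sup_right (inv_mem htV))

variable [Finite G] [Fact p.Prime]

theorem Sylow.normalizer_le_centralizer_of_card_eq_index (P : Sylow p G) [IsMulCommutative P]
    (h : Nat.card (Sylow p G) = P.index) : normalizer (P : Set G) ≤ centralizer (P : Set G) := by
  have hidx : (normalizer (P : Set G)).index = P.index := P.card_eq_index_normalizer.symm.trans h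
  have hN : (P : Subgroup G) = normalizer (P : Set G) :=
    le_normalizer.eq_of_not_lt fun hlt ↦ (index_strictAnti hlt).ne hidx
  rw [← hN]
  exact le_centralizer (P : Subgroup G)

theorem Sylow.not_dvd_card_of_forall_mem_eq_mul_of_sq_eq_one (hp : Odd p) (P : Sylow p G)
    (hP : normalizer (P : Set G) ≤ centralizer (P : Set G)) {U : Subgroup G}
    (hU : ∀ u ∈ U, ∃ s₁ s₂ : G, s₁ ^ 2 = 1 ∧ s₂ ^ 2 = 1 ∧ s₁ * s₂ = u) :
    ¬ p ∣ Nat.card U := by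
  set φ := MonoidHom.transferSylow P hP
  have hodd : Odd (Nat.card P) := by
    obtain ⟨k, hk⟩ := P.isPGroup'.exists_card_eq
    exact hk ▸ hp.pow
  have hle : U ≤ φ.ker := fun u hu ↦ by
    obtain ⟨s₁, s₂, h₁, h₂, rfl⟩ := hU u hu
    rw [MonoidHom.mem_ker, map_mul, φ.map_eq_one_of_sq_eq_one hodd h₁,
      φ.map_eq_one_of_sq_eq_one hodd h₂, mul_one]
  exact fun h ↦ MonoidHom.not_dvd_card_ker_transferSylow P hP (h.trans (card_dvd_of_le hle))

theorem Sylow.card_eq_three_of_card_eq_48 (hG : Nat.card G = 48) (P : Sylow 3 G) :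
    Nat.card P = 3 := by
  rw [P.card_eq_multiplicity, hG, show 48 = 3 * 16 from rfl,
    Nat.factorization_mul_apply_of_coprime (by norm_num), Nat.prime_three.factorization_self,
    Nat.factorization_eq_zero_of_not_dvd (by norm_num), add_zero, pow_one]

theorem Sylow.index_eq_sixteen_of_card_eq_48 (hG : Nat.card G = 48) (P : Sylow 3 G) :
    P.index = 16 := by
  have h := (P : Subgroup G).card_mul_index
  rw [P.card_eq_three_of_card_eq_48 hG, hG] at h
  omega

theorem card_sylow_three_eq_one_or_four_or_sixteen (hG : Nat.card G = 48) :
    Nat.card (Sylow 3 G) = 1 ∨ Nat.card (Sylow 3 G) = 4 ∨ Nat.card (Sylow 3 G) = 16 := by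
  obtain ⟨P⟩ : Nonempty (Sylow 3 G) := inferInstance
  have hdvd : Nat.card (Sylow 3 G) ∣ 16 := P.index_eq_sixteen_of_card_eq_48 hG ▸ P.card_dvd_index
  have hmod : Nat.card (Sylow 3 G) ≡ 1 [MOD 3] := card_sylow_modEq_one 3 G
  have hle := Nat.le_of_dvd (by norm_num) hdvd
  generalize Nat.card (Sylow 3 G) = n at *
  interval_cases n <;> simp_all [Nat.ModEq]

end

theorem order_48_gen_by_D3_D2_four_sylow3 (G : Type*) [Group G] [Finite G]
    (hG : Nat.card G = 48) (U V : Subgroup G)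
    (hU : Nonempty (U ≃* DihedralGroup 3))
    (hV : Nonempty (V ≃* DihedralGroup 2))
    (hUV : Nonempty ((↥(U ⊓ V)) ≃* Multiplicative (ZMod 2)))
    (hgen : U ⊔ V = ⊤) :
    Nat.card (Sylow 3 G) = 4 := by
  obtain ⟨eU⟩ := hU
  obtain ⟨eV⟩ := hV
  obtain ⟨t, ⟨htU, htV⟩, ht1, ht2⟩ := exists_mem_ne_one_sq_eq_one_of_mulEquiv hUV.some
  obtain ⟨P⟩ : Nonempty (Sylow 3 G) := inferInstance
  have hP : P.index = 16 := P.index_eq_sixteen_of_card_eq_48 hG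
  have h3 : Odd 3 := by decide
  rcases card_sylow_three_eq_one_or_four_or_sixteen hG with h | h | h
  · have : Subsingleton (Sylow 3 G) := (Nat.card_eq_one_iff_unique.mp h).1
    have : (P : Subgroup G).Normal := P.normal_of_subsingleton
    have hPV : (P : Subgroup G) ⊔ V = ⊤ := eq_top_iff.mpr <| hgen ▸
      sup_le (P.le_sup_of_mulEquiv_dihedralGroup h3 eU htU htV ht1 ht2) le_sup_right
    have := index_dvd_card_of_sup_eq_top hPV
    rw [hP, Nat.card_congr eV.toEquiv, DihedralGroup.nat_card] at this
    norm_num at this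
  · exact h
  · have : IsCyclic P := isCyclic_of_prime_card (P.card_eq_three_of_card_eq_48 hG)
    have hNC := P.normalizer_le_centralizer_of_card_eq_index (h.trans hP.symm)
    have h3U : 3 ∣ Nat.card U := by
      rw [Nat.card_congr eU.toEquiv, DihedralGroup.nat_card]
      exact dvd_mul_left 3 2
    exact absurd h3U (P.not_dvd_card_of_forall_mem_eq_mul_of_sq_eq_one h3 hNC
      fun u hu ↦ exists_sq_eq_one_mul_eq_of_mulEquiv eU hu)
end
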